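/- arXiv:1108.2120 — 6 statements merged into one kernel-verified Lean document; each statement's English description precedes it below -/
import Mathlib

section
/- Let X_{ij} ~ N(θ_i, σ²) independent for i = 1,…,n, j = 1,…,k with k ≥ 2 fixed. The maximum likelihood estimator of σ², namely σ̂² = (1/(nk)) Σ_i Σ_j (X_{ij} − X̄_i)², converges in probability to (k−1)σ²/k as n → ∞, and hence is an inconsistent estimator of σ². (Neyman–Scott phenomenon.) -/
/-!
The row sums of squares `S i = ∑ j (X i j - X̄ i)²` depend on disjoint blocks of the array, so they
are independent, and they do not change when row `i` is shifted by `θ i`, so they all have the law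
of `S` under `N(0, σ²)^k`. The classical unbiasedness of the sample variance gives
`E (S i) = (k - 1) σ²`, and the strong law of large numbers yields
`(1 / n) ∑_{i<n} S i → (k - 1) σ²` almost surely, hence in probability.
-/

open MeasureTheory ProbabilityTheory Filter Finset
open scoped NNReal

section SumSqDev

variable {ι : Type*} [Fintype ι]

noncomputable def sumSqDev (v : ι → ℝ) : ℝ := ∑ j, (v j - (∑ j', v j') / Fintype.card ι) ^ 2

lemma measurable_sumSqDev : Measurable (sumSqDev : (ι → ℝ) → ℝ) := by
  unfold sumSqDev; fun_prop

lemma sumSqDev_sub_const (v : ι → ℝ) (c : ℝ) : sumSqDev (fun j => v j - c) = sumSqDev v := by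
  rcases isEmpty_or_nonempty ι with hι | hι
  · simp [sumSqDev]
  · have : (Fintype.card ι : ℝ) ≠ 0 := by positivity
    simp only [sumSqDev, sum_sub_distrib, sum_const, card_univ, nsmul_eq_mul]
    congr 1 with j
    field_simp
    ring

lemma sumSqDev_eq_sum_sq_sub [Nonempty ι] (v : ι → ℝ) (m : ℝ) :
    sumSqDev v = ∑ j, (v j - m) ^ 2 - (∑ j, v j - Fintype.card ι * m) ^ 2 / Fintype.card ι := by
  have : (Fintype.card ι : ℝ) ≠ 0 := by positivity
  rw [← sumSqDev_sub_const v m, sumSqDev]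
  simp only [sub_sq, sum_add_distrib, sum_sub_distrib, ← mul_sum, ← sum_mul, sum_const, card_univ,
    nsmul_eq_mul]
  field_simp
  ring

variable {Ω : Type*} [MeasurableSpace Ω] {μ : Measure Ω} {X : ι → Ω → ℝ}

lemma integrable_sumSqDev (hX : ∀ j, MemLp (X j) 2 μ) :
    Integrable (fun ω => sumSqDev fun j => X j ω) μ := by
  refine integrable_finsetSum _ fun j _ => MemLp.integrable_sq ?_
  simp only [div_eq_inv_mul]
  exact (hX j).sub ((memLp_finsetSum univ fun j' _ => hX j').const_mul (Fintype.card ι : ℝ)⁻¹)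

lemma integral_sumSqDev [Nonempty ι] [IsProbabilityMeasure μ] (hX : ∀ j, MemLp (X j) 2 μ)
    (hindep : Pairwise fun i j => IndepFun (X i) (X j) μ) {m v : ℝ} (hm : ∀ j, μ[X j] = m)
    (hv : ∀ j, Var[X j; μ] = v) :
    ∫ ω, sumSqDev (fun j => X j ω) ∂μ = (Fintype.card ι - 1) * v := by
  have hn : (Fintype.card ι : ℝ) ≠ 0 := by positivity
  have hS : MemLp (∑ j, X j) 2 μ := memLp_finsetSum' _ fun j _ => hX j
  have hdev : ∀ j, ∫ ω, (X j ω - m) ^ 2 ∂μ = v := fun j => by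
    rw [← hv j, variance_eq_integral (hX j).aemeasurable, hm]
  have hdevS : ∫ ω, (∑ j, X j ω - Fintype.card ι * m) ^ 2 ∂μ = Fintype.card ι * v := by
    have hmean : μ[∑ j, X j] = Fintype.card ι * m := by
      simp [integral_finsetSum _ fun j _ => (hX j).integrable one_le_two, hm]
    have hvar : Var[∑ j, X j; μ] = Fintype.card ι * v := by
      simp [IndepFun.variance_sum (fun j _ => hX j) fun i _ j _ hij => hindep hij, hv]
    rw [variance_eq_integral hS.aemeasurable, hmean] at hvar
    simpa using hvar
  simp_rw [sumSqDev_eq_sum_sq_sub _ m]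
  rw [integral_sub, integral_finsetSum, integral_div, hdevS]
  · simp [hdev]; field_simp
  · exact fun j _ => ((hX j).sub (memLp_const m)).integrable_sq
  · exact integrable_finsetSum _ fun j _ => ((hX j).sub (memLp_const m)).integrable_sq
  · simpa using ((hS.sub (memLp_const (Fintype.card ι * m))).integrable_sq).div_const _

end SumSqDev

namespace ProbabilityTheory

variable {Ω : Type*} [MeasurableSpace Ω] {μ : Measure Ω}

lemma iIndepFun.indepFun_row {ι κ β : Type*} [Fintype κ] [MeasurableSpace β]
    {X : ι → κ → Ω → β} (hX : ∀ i j, Measurable (X i j))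
    (h : iIndepFun (fun p : ι × κ => X p.1 p.2) μ) {a b : ι} (hab : a ≠ b) :
    IndepFun (fun ω j => X a j ω) (fun ω j => X b j ω) μ := by
  classical
  have hdisj : Disjoint ({a} ×ˢ univ : Finset (ι × κ)) ({b} ×ˢ univ) :=
    disjoint_product.2 (.inl (disjoint_singleton.2 hab))
  exact (h.indepFun_finset _ _ hdisj fun p => hX p.1 p.2).comp
    (φ := fun v j => v ⟨(a, j), by simp⟩) (ψ := fun v j => v ⟨(b, j), by simp⟩)
    (measurable_pi_lambda _ fun _ => measurable_pi_apply _)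
    (measurable_pi_lambda _ fun _ => measurable_pi_apply _)

variable {κ : Type*} [Fintype κ]

lemma iIndepFun.hasLaw_sub_pi_gaussianReal {Y : κ → Ω → ℝ} {m : ℝ} {v : ℝ≥0}
    (hY : ∀ j, HasLaw (Y j) (gaussianReal m v) μ) (h : iIndepFun Y μ) :
    HasLaw (fun ω j => Y j ω - m) (Measure.pi fun _ => gaussianReal 0 v) μ :=
  iIndepFun.hasLaw_pi (fun j => by simpa using gaussianReal_sub_const (hY j) m)
    (h.comp (fun _ x => x - m) fun _ => measurable_sub_const m)

lemma identDistrib_sumSqDev_of_gaussianReal {Y Y' : κ → Ω → ℝ} {m m' : ℝ} {v : ℝ≥0}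
    (hY : ∀ j, HasLaw (Y j) (gaussianReal m v) μ) (hY' : ∀ j, HasLaw (Y' j) (gaussianReal m' v) μ)
    (h : iIndepFun Y μ) (h' : iIndepFun Y' μ) :
    IdentDistrib (fun ω => sumSqDev fun j => Y j ω) (fun ω => sumSqDev fun j => Y' j ω) μ μ := by
  have hc := h.hasLaw_sub_pi_gaussianReal hY
  have hc' := h'.hasLaw_sub_pi_gaussianReal hY'
  have : IdentDistrib (fun ω j => Y j ω - m) (fun ω j => Y' j ω - m') μ μ :=
    ⟨hc.aemeasurable, hc'.aemeasurable, hc.map_eq.trans hc'.map_eq.symm⟩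
  simpa only [Function.comp_def, sumSqDev_sub_const] using this.comp measurable_sumSqDev

end ProbabilityTheory

/-- **The Neyman–Scott phenomenon: inconsistency of the MLE of the variance.**
Let `X i j ~ N(θ i, σ²)` be independent for `i ∈ ℕ`, `j ∈ Fin k`, `k ≥ 2` fixed.
The MLE of `σ²`, `σ̂²_n = (1/(nk)) ∑_{i<n} ∑_j (X i j - X̄ i)²`, converges in
probability to `(k-1)σ²/k` as `n → ∞`, hence is inconsistent for `σ²`. -/
theorem neyman_scott_mle_inconsistent
    {Ω : Type*} [MeasureSpace Ω] [IsProbabilityMeasure (ℙ : Measure Ω)]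
    (k : ℕ) (hk : 2 ≤ k) (θ : ℕ → ℝ) (σ2 : NNReal) (hσ2 : 0 < σ2)
    (X : ℕ → Fin k → Ω → ℝ)
    (hmeas : ∀ i j, Measurable (X i j))
    (hindep : iIndepFun
      (fun (p : ℕ × Fin k) ω => X p.1 p.2 ω) ℙ)
    (hdist : ∀ i j, Measure.map (X i j) ℙ = gaussianReal (θ i) σ2) :
    TendstoInMeasure ℙ
      (fun n ω =>
        (∑ i ∈ Finset.range n, ∑ j : Fin k,
            (X i j ω - (∑ j' : Fin k, X i j' ω) / k) ^ 2) / (n * k))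
      atTop
      (fun _ => ((k : ℝ) - 1) / k * σ2) ∧
    ((k : ℝ) - 1) / k * σ2 ≠ (σ2 : ℝ) := by
  have : Nonempty (Fin k) := ⟨⟨0, by omega⟩⟩
  have hk0 : (k : ℝ) ≠ 0 := by positivity
  have hlaw : ∀ i j, HasLaw (X i j) (gaussianReal (θ i) σ2) ℙ :=
    fun i j => ⟨(hmeas i j).aemeasurable, hdist i j⟩
  have hrow : ∀ i, iIndepFun (X i) ℙ := fun i =>
    (hindep.precomp (Prod.mk_right_injective i) :)
  set Y : ℕ → Ω → ℝ := fun i ω => sumSqDev fun j => X i j ω with hY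
  have hY_indep : Pairwise fun a b => IndepFun (Y a) (Y b) ℙ := fun a b hab =>
    (hindep.indepFun_row hmeas hab).comp measurable_sumSqDev measurable_sumSqDev
  have hY_ident : ∀ i, IdentDistrib (Y i) (Y 0) ℙ ℙ := fun i =>
    identDistrib_sumSqDev_of_gaussianReal (hlaw i) (hlaw 0) (hrow i) (hrow 0)
  have hL2 : ∀ j, MemLp (X 0 j) 2 ℙ := fun j => (hlaw 0 j).hasGaussianLaw.memLp_two
  have hY_mean : ℙ[Y 0] = ((k : ℝ) - 1) * σ2 := by
    simpa using integral_sumSqDev hL2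
      (fun i j hij => hindep.indepFun ((Prod.mk_right_injective 0).ne hij))
      (m := θ 0) (fun j => by simp [(hlaw 0 j).integral_eq])
      (v := σ2) (fun j => by simp [(hlaw 0 j).variance_eq])
  have hslln := strong_law_ae Y (integrable_sumSqDev hL2) hY_indep hY_ident
  refine ⟨tendstoInMeasure_of_tendsto_ae (fun n => by fun_prop) ?_, ?_⟩
  · filter_upwards [hslln] with ω hω
    convert hω.div_const (k : ℝ) using 2 with n
    · simp [hY, sumSqDev, div_div, inv_mul_eq_div]
    · rw [hY_mean]; ring
  · have : (0 : ℝ) < σ2 := hσ2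
    rw [Ne, div_mul_eq_mul_div, div_eq_iff hk0]
    nlinarith
end

section
/- For the one-parameter exponential family f(x|θ) = exp[θx − ψ(θ) + h(x)] with canonical parameter θ, one has g₃(θ) = ψ'''(θ) = I′(θ), and hence the GML prior π_GML(θ) ∝ exp[(1/4)∫ I′(θ)/I(θ) dθ] = I^{1/4}(θ). -/
open Real

/-!
In canonical coordinates `log f` is affine in `x` up to `-ψ(θ)`, so `I = ψ''` and `g₃ = ψ''' = I'`.
The GML equation then reads `π'/π = (1/4) I'/I`, i.e. `log π - (1/4) log I` has zero derivative,
so `π = C · I^{1/4}`.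
-/

theorem exists_pos_const_mul_rpow_of_deriv_div_eq {f g : ℝ → ℝ} {c : ℝ}
    (hf : Differentiable ℝ f) (hg : Differentiable ℝ g)
    (hfpos : ∀ t, 0 < f t) (hgpos : ∀ t, 0 < g t)
    (h : ∀ t, deriv f t / f t = c * (deriv g t / g t)) :
    ∃ C : ℝ, 0 < C ∧ ∀ t, f t = C * g t ^ c := by
  have hderiv : ∀ t, HasDerivAt (fun t => log (f t) - c * log (g t)) 0 t := fun t => by
    have := ((hf t).hasDerivAt.log (hfpos t).ne').sub
      (((hg t).hasDerivAt.log (hgpos t).ne').const_mul c)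
    rwa [h t, sub_self] at this
  have hconst (t : ℝ) : log (f t) - c * log (g t) = log (f 0) - c * log (g 0) :=
    is_const_of_deriv_eq_zero (fun t => (hderiv t).differentiableAt) (fun t => (hderiv t).deriv) t 0
  refine ⟨exp (log (f 0) - c * log (g 0)), exp_pos _, fun t => ?_⟩
  rw [← hconst t, rpow_def_of_pos (hgpos t), ← exp_add, mul_comm (log (g t)), sub_add_cancel,
    exp_log (hfpos t)]

/-- **The GML prior in the one-parameter exponential family.**
For `f(x|θ) = exp[θx - ψ(θ) + h(x)]` with canonical parameter `θ`, the Fisher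
information is `I = ψ''` and `g₃ = ψ''' = I'`; hence any GML prior, i.e. any
positive `π` with `π'/π = (2g₃ - I')/(4I) = I'/(4I)`, is proportional to
`I^{1/4}`. -/
theorem GML_prior_exponential_family
    (ψ I g₃ : ℝ → ℝ) (hψ : ContDiff ℝ 3 ψ)
    (hI : ∀ t, I t = iteratedDeriv 2 ψ t)
    (hg₃ : ∀ t, g₃ t = iteratedDeriv 3 ψ t)
    (hIpos : ∀ t, 0 < I t)
    (p : ℝ → ℝ) (hppos : ∀ t, 0 < p t) (hpdiff : Differentiable ℝ p)
    (hp : ∀ t, deriv p t / p t = (2 * g₃ t - deriv I t) / (4 * I t)) :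
    (∀ t, g₃ t = deriv I t) ∧
    ∃ C : ℝ, 0 < C ∧ ∀ t, p t = C * (I t) ^ ((1 : ℝ) / 4) := by
  obtain rfl : I = iteratedDeriv 2 ψ := funext hI
  have hg₃_eq (t : ℝ) : g₃ t = deriv (iteratedDeriv 2 ψ) t := by
    rw [hg₃, iteratedDeriv_succ]
  have hIdiff : Differentiable ℝ (iteratedDeriv 2 ψ) :=
    hψ.differentiable_iteratedDeriv 2 (by norm_num)
  refine ⟨hg₃_eq, exists_pos_const_mul_rpow_of_deriv_div_eq hpdiff hIdiff hppos hIpos fun t => ?_⟩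
  rw [hp t, hg₃_eq t]
  field_simp
  ring
end

section
/- For the binomial proportion p, the GML prior under chi-square divergence is proportional to p^{-3/4}(1−p)^{-3/4}, i.e., it is the Beta(1/4, 1/4) density up to normalization. (Obtained by transforming the canonical-parameter prior I^{1/4}(θ) with θ = logit(p) via the invariance property.) -/
open Real

theorem hasDerivAt_log_div_one_sub {p : ℝ} (hp : p ≠ 0) (hp1 : p ≠ 1) :
    HasDerivAt (fun q : ℝ => log (q / (1 - q))) (1 / (p * (1 - p))) p := by
  have hsub : 1 - p ≠ 0 := sub_ne_zero.mpr (Ne.symm hp1)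
  have hodds : HasDerivAt (fun q : ℝ => q / (1 - q)) (1 / (1 - p) ^ 2) p := by
    refine ((hasDerivAt_id' p).fun_div ((hasDerivAt_id' p).const_sub 1) hsub).congr_deriv ?_
    ring
  refine (hodds.log (div_ne_zero hp hsub)).congr_deriv ?_
  field_simp

/-- **The GML prior for the binomial proportion is Beta(1/4, 1/4).**
With `θ = logit p`, the GML prior in the canonical parameterization is
`I^{1/4}(θ) = (p(1-p))^{1/4}`, and `dθ/dp = 1/(p(1-p))`; by the invariance
property, the induced prior on `p` is
`(p(1-p))^{1/4} · |dθ/dp| = p^{-3/4}(1-p)^{-3/4}`, the `Beta(1/4,1/4)` density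
up to normalization. -/
theorem GML_prior_binomial (p : ℝ) (hp : 0 < p) (hp1 : p < 1) :
    deriv (fun q : ℝ => Real.log (q / (1 - q))) p = 1 / (p * (1 - p)) ∧
    (p * (1 - p)) ^ ((1 : ℝ) / 4) *
        |deriv (fun q : ℝ => Real.log (q / (1 - q))) p| =
      p ^ (-(3 / 4 : ℝ)) * (1 - p) ^ (-(3 / 4 : ℝ)) := by
  have hq : 0 < 1 - p := sub_pos.mpr hp1
  have hderiv := (hasDerivAt_log_div_one_sub hp.ne' hp1.ne).deriv
  refine ⟨hderiv, ?_⟩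
  rw [hderiv, abs_of_pos (by positivity), ← div_eq_mul_one_div,
    ← rpow_sub_one (by positivity), ← mul_rpow hp.le hq.le]
  norm_num
end

section
/- For the canonical one-parameter exponential family, the moment matching prior π_M(θ) = exp[−(1/2)∫^θ g₃(t)/I(t) dt] equals Jeffreys' prior I^{1/2}(θ); and a general moment matching prior equals Jeffreys' prior I^{1/2}(θ) if and only if g₃(θ) = I′(θ), while π_M is constant if and only if g₃(θ) ≡ 0. -/
open Real

/-! Both claims compare `π_M` with a positive reference density through logarithmic derivatives:
two positive differentiable functions on `ℝ` are proportional iff their logarithmic derivatives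
agree.  The logarithmic derivative of `π_M` is `g₃ / (2I)`, that of Jeffreys' prior `√I` is
`I' / (2I)` and that of a constant is `0`. -/

theorem exists_pos_const_mul_iff_logDeriv_eq {f g : ℝ → ℝ} (hf : Differentiable ℝ f)
    (hg : Differentiable ℝ g) (hfpos : ∀ x, 0 < f x) (hgpos : ∀ x, 0 < g x) :
    (∃ C, 0 < C ∧ ∀ x, f x = C * g x) ↔ logDeriv f = logDeriv g := by
  rw [← Set.eqOn_univ, logDeriv_eqOn_iff hf.differentiableOn hg.differentiableOn isOpen_univ
    isPreconnected_univ (fun x _ => (hgpos x).ne') (fun x _ => (hfpos x).ne')]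
  constructor
  · rintro ⟨C, hC, hfg⟩
    exact ⟨C, hC.ne', fun x _ => hfg x⟩
  · rintro ⟨C, -, hfg⟩
    have hC : f 0 = C * g 0 := hfg (Set.mem_univ 0)
    exact ⟨C, pos_of_mul_pos_left (hC ▸ hfpos 0) (hgpos 0).le, fun x => hfg (Set.mem_univ x)⟩

theorem logDeriv_sqrt {f : ℝ → ℝ} {x : ℝ} (hf : DifferentiableAt ℝ f x) (hx : 0 < f x) :
    logDeriv (fun y => √(f y)) x = deriv f x / (2 * f x) := by
  rw [logDeriv_apply, (hf.hasDerivAt.sqrt hx.ne').deriv, div_div, mul_assoc,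
    mul_self_sqrt hx.le]

theorem moment_matching_prior_characterization_general
    (I g₃ : ℝ → ℝ) (hIpos : ∀ t, 0 < I t) (hIdiff : Differentiable ℝ I)
    (p : ℝ → ℝ) (hppos : ∀ t, 0 < p t) (hpdiff : Differentiable ℝ p)
    (hp : ∀ t, deriv p t / p t = g₃ t / (2 * I t)) :
    -- canonical exponential family: g₃ = I' forces the Jeffreys prior
    ((∀ t, g₃ t = deriv I t) →
      ∃ C : ℝ, 0 < C ∧ ∀ t, p t = C * Real.sqrt (I t)) ∧
    -- π_M ∝ I^{1/2} if and only if g₃ = I'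
    ((∃ C : ℝ, 0 < C ∧ ∀ t, p t = C * Real.sqrt (I t)) ↔ ∀ t, g₃ t = deriv I t) ∧
    -- π_M is constant if and only if g₃ ≡ 0
    ((∃ C : ℝ, 0 < C ∧ ∀ t, p t = C) ↔ ∀ t, g₃ t = 0) := by
  have hlogDeriv : logDeriv p = fun t => g₃ t / (2 * I t) := funext hp
  have h2I : ∀ t, 2 * I t ≠ 0 := fun t => (mul_pos two_pos (hIpos t)).ne'
  have jeffreys : (∃ C, 0 < C ∧ ∀ t, p t = C * √(I t)) ↔ ∀ t, g₃ t = deriv I t := by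
    rw [exists_pos_const_mul_iff_logDeriv_eq hpdiff (hIdiff.sqrt fun t => (hIpos t).ne') hppos
      fun t => sqrt_pos.mpr (hIpos t), hlogDeriv, funext_iff]
    refine forall_congr' fun t => ?_
    rw [logDeriv_sqrt (hIdiff t) (hIpos t), div_left_inj' (h2I t)]
  have flat : (∃ C, 0 < C ∧ ∀ t, p t = C) ↔ ∀ t, g₃ t = 0 := by
    have h := exists_pos_const_mul_iff_logDeriv_eq hpdiff (differentiable_const 1) hppos
      fun _ => one_pos
    simp only [mul_one, logDeriv_const, hlogDeriv, funext_iff, Pi.zero_apply] at h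
    rw [h]
    exact forall_congr' fun t => div_eq_zero_iff.trans (or_iff_left (h2I t))
  exact ⟨jeffreys.mpr, jeffreys, flat⟩

/-- **Moment matching priors versus Jeffreys' prior.**
The moment matching prior is characterized (with the paper's consistent sign
convention, `π_M ∝ exp[(1/2)∫ g₃/I]`, equivalently
`exp[(1/2)∫ I'/I]` in the canonical exponential family) by the logarithmic
derivative equation `π' / π = g₃/(2I)`.  For the canonical one-parameter
exponential family, `g₃ = I'` and the moment matching prior equals Jeffreys'
prior `I^{1/2}`; in general, `π_M ∝ I^{1/2}` iff `g₃ = I'`, and `π_M` is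
constant iff `g₃ ≡ 0`. -/
theorem moment_matching_prior_characterization
    (I g₃ : ℝ → ℝ) (hIpos : ∀ t, 0 < I t) (hIdiff : Differentiable ℝ I)
    (hg₃cont : Continuous g₃)
    (p : ℝ → ℝ) (hppos : ∀ t, 0 < p t) (hpdiff : Differentiable ℝ p)
    (hp : ∀ t, deriv p t / p t = g₃ t / (2 * I t)) :
    -- canonical exponential family: g₃ = I' forces the Jeffreys prior
    ((∀ t, g₃ t = deriv I t) →
      ∃ C : ℝ, 0 < C ∧ ∀ t, p t = C * Real.sqrt (I t)) ∧
    -- π_M ∝ I^{1/2} if and only if g₃ = I'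
    ((∃ C : ℝ, 0 < C ∧ ∀ t, p t = C * Real.sqrt (I t)) ↔ ∀ t, g₃ t = deriv I t) ∧
    -- π_M is constant if and only if g₃ ≡ 0
    ((∃ C : ℝ, 0 < C ∧ ∀ t, p t = C) ↔ ∀ t, g₃ t = 0) :=
  moment_matching_prior_characterization_general I g₃ hIpos hIdiff p hppos hpdiff hp
end

section
/- If φ is a one-to-one differentiable function of θ, then the moment matching prior transforms as π_M(φ) = π_M(θ)|dθ/dφ|^{3/2}; in particular, the moment matching prior is NOT invariant under one-to-one reparameterization (it does not transform with the Jacobian |dθ/dφ|). -/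
/-!
Both `π_M(φ)` and `π_M(θ(φ)) · θ'(φ)^{3/2}` are positive solutions of the same first-order
equation `p'/p = g₃,φ / (2 I_φ)`: by the chain rule for logarithmic derivatives the second one
has logarithmic derivative `(g₃/(2I))(θ) · θ' + (3/2) θ''/θ'`, and the transformation rules for
`I` and `g₃` turn `g₃,φ / (2 I_φ)` into exactly this expression. Two positive functions with
the same logarithmic derivative differ by a positive constant factor.
-/

open Real

lemma exists_pos_const_mul_of_logDeriv_eq {f g : ℝ → ℝ} (hf : Differentiable ℝ f)
    (hg : Differentiable ℝ g) (hfpos : ∀ x, 0 < f x) (hgpos : ∀ x, 0 < g x)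
    (h : ∀ x, logDeriv f x = logDeriv g x) : ∃ C : ℝ, 0 < C ∧ ∀ x, f x = C * g x := by
  obtain ⟨C, -, hC⟩ := (logDeriv_eqOn_iff hf.differentiableOn hg.differentiableOn isOpen_univ
    isPreconnected_univ (fun x _ ↦ (hgpos x).ne') (fun x _ ↦ (hfpos x).ne')).mp fun x _ ↦ h x
  have hfC : ∀ x, f x = C * g x := fun x ↦ hC (Set.mem_univ x)
  exact ⟨C, pos_of_mul_pos_left (hfC 0 ▸ hfpos 0) (hgpos 0).le, hfC⟩

lemma logDeriv_fun_rpow_const {f : ℝ → ℝ} {x : ℝ} (hf : DifferentiableAt ℝ f x) (hfx : 0 < f x)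
    (r : ℝ) : logDeriv (fun y ↦ f y ^ r) x = r * logDeriv f x := by
  rw [logDeriv_apply, (hf.hasDerivAt.rpow_const (Or.inl hfx.ne')).deriv, rpow_sub_one hfx.ne',
    logDeriv_apply]
  have : f x ^ r ≠ 0 := (rpow_pos_of_pos hfx r).ne'
  field_simp

/-- The left side is `g₃,φ / (2 I_φ)` with `g = g₃(θ)`, `i = I(θ)`, `a = θ'`, `b = θ''`. -/
lemma moment_matching_ratio_reparam (g i a b : ℝ) (hi : i ≠ 0) (ha : a ≠ 0) :
    (g * a ^ 3 + 3 * i * a * b) / (2 * (i * a ^ 2)) = g / (2 * i) * a + 3 / 2 * (b / a) := by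
  field_simp

theorem moment_matching_prior_transformation_general
    (θ : ℝ → ℝ) (hθ : ContDiff ℝ 2 θ) (hθ' : ∀ x, 0 < deriv θ x)
    (I g₃ Iφ g₃φ : ℝ → ℝ)
    (hIpos : ∀ t, 0 < I t)
    (hIφ : ∀ x, Iφ x = I (θ x) * (deriv θ x) ^ 2)
    (hg₃φ : ∀ x, g₃φ x = g₃ (θ x) * (deriv θ x) ^ 3
      + 3 * I (θ x) * deriv θ x * deriv (deriv θ) x)
    (pθ pφ : ℝ → ℝ)
    (hpθpos : ∀ t, 0 < pθ t) (hpθdiff : Differentiable ℝ pθ)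
    (hpφpos : ∀ x, 0 < pφ x) (hpφdiff : Differentiable ℝ pφ)
    (hpθ : ∀ t, deriv pθ t / pθ t = g₃ t / (2 * I t))
    (hpφ : ∀ x, deriv pφ x / pφ x = g₃φ x / (2 * Iφ x)) :
    ∃ C : ℝ, 0 < C ∧ ∀ x, pφ x = C * pθ (θ x) * |deriv θ x| ^ ((3 : ℝ) / 2) := by
  have hθd : Differentiable ℝ θ := hθ.differentiable (by norm_num)
  have hθ'd : Differentiable ℝ (deriv θ) := by
    simpa only [iteratedDeriv_one] using hθ.differentiable_iteratedDeriv 1 (by norm_num)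
  have hpθθd : Differentiable ℝ (pθ ∘ θ) := hpθdiff.comp hθd
  have hJd : Differentiable ℝ (fun x ↦ deriv θ x ^ ((3 : ℝ) / 2)) :=
    hθ'd.rpow_const fun x ↦ Or.inl (hθ' x).ne'
  have hlog : ∀ x, logDeriv pφ x = logDeriv (fun x ↦ pθ (θ x) * deriv θ x ^ ((3 : ℝ) / 2)) x := by
    intro x
    calc logDeriv pφ x = g₃φ x / (2 * Iφ x) := hpφ x
      _ = g₃ (θ x) / (2 * I (θ x)) * deriv θ x + 3 / 2 * (deriv (deriv θ) x / deriv θ x) := by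
        rw [hg₃φ, hIφ]
        exact moment_matching_ratio_reparam _ _ _ _ (hIpos _).ne' (hθ' x).ne'
      _ = logDeriv (pθ ∘ θ) x + logDeriv (fun y ↦ deriv θ y ^ ((3 : ℝ) / 2)) x := by
        rw [logDeriv_comp (hpθdiff _) (hθd x), logDeriv_fun_rpow_const (hθ'd x) (hθ' x),
          logDeriv_apply pθ, hpθ, logDeriv_apply (deriv θ)]
      _ = _ := (logDeriv_mul (f := pθ ∘ θ) (g := fun y ↦ deriv θ y ^ ((3 : ℝ) / 2)) x
        (hpθpos _).ne' (rpow_pos_of_pos (hθ' x) _).ne' (hpθθd x) (hJd x)).symm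
  obtain ⟨C, hC, hpφC⟩ := exists_pos_const_mul_of_logDeriv_eq hpφdiff (hpθθd.mul hJd) hpφpos
    (fun x ↦ mul_pos (hpθpos _) (rpow_pos_of_pos (hθ' x) _)) hlog
  refine ⟨C, hC, fun x ↦ ?_⟩
  rw [hpφC x, abs_of_pos (hθ' x), mul_assoc]
  rfl

/-- **Transformation law (non-invariance) of the moment matching prior.**
With the moment matching prior characterized by `π_M'/π_M = g₃/(2I)` in each
parameterization, and the transformation rules `I_φ = I(θ) θ'²`,
`g₃,φ = g₃(θ) θ'³ + 3 I(θ) θ' θ''` under the one-to-one differentiable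
reparameterization `φ ↦ θ(φ)`, the prior transforms as
`π_M(φ) = C · π_M(θ(φ)) · |dθ/dφ|^{3/2}` — i.e. with the 3/2 power of the
Jacobian rather than the Jacobian itself, so it is not invariant. -/
theorem moment_matching_prior_transformation
    (θ : ℝ → ℝ) (hθ : ContDiff ℝ 2 θ) (hθ' : ∀ x, 0 < deriv θ x)
    (I g₃ Iφ g₃φ : ℝ → ℝ)
    (hIpos : ∀ t, 0 < I t) (hIdiff : Differentiable ℝ I)
    (hIφ : ∀ x, Iφ x = I (θ x) * (deriv θ x) ^ 2)
    (hg₃φ : ∀ x, g₃φ x = g₃ (θ x) * (deriv θ x) ^ 3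
      + 3 * I (θ x) * deriv θ x * deriv (deriv θ) x)
    (pθ pφ : ℝ → ℝ)
    (hpθpos : ∀ t, 0 < pθ t) (hpθdiff : Differentiable ℝ pθ)
    (hpφpos : ∀ x, 0 < pφ x) (hpφdiff : Differentiable ℝ pφ)
    (hpθ : ∀ t, deriv pθ t / pθ t = g₃ t / (2 * I t))
    (hpφ : ∀ x, deriv pφ x / pφ x = g₃φ x / (2 * Iφ x)) :
    ∃ C : ℝ, 0 < C ∧ ∀ x, pφ x = C * pθ (θ x) * |deriv θ x| ^ ((3 : ℝ) / 2) :=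
  moment_matching_prior_transformation_general θ hθ hθ' I g₃ Iφ g₃φ hIpos hIφ hg₃φ pθ pφ hpθpos
    hpθdiff hpφpos hpφdiff hpθ hpφ
end

section
/- For the bivariate normal with zero means, unit variances, and correlation ρ ∈ (−1,1): the Fisher information is I(ρ) = (1+ρ²)/(1−ρ²)², the third log-likelihood derivative expectation satisfies E[(∂³ log f/∂ρ³)-related quantity] L_{1,1,1} = −2ρ(3+ρ²)/(1−ρ²)³, and the ratio L_{1,1,1}/I^{3/2}(ρ) = −2ρ(3+ρ²)/(1+ρ²)^{3/2} is not constant in ρ; hence Jeffreys' prior fails the second-order probability matching condition in this model. -/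
/-!
In the sheared coordinates `u = x₁`, `w = x₂ - ρ x₁` the density factors as `φ₁(u) φ_v(w)`, the
product of the centred Gaussian densities of variances `1` and `v = 1 - ρ²`, and the score becomes
`s = u w / v - ρ (w² - v) / v²`. Hence `I` and `L₁,₁,₁` are the second and third moments of
`s(U, W)` for independent `U ~ N(0,1)`, `W ~ N(0,v)`. Integrating out `W` first leaves polynomials
in `U`, and the Gaussian moments `E W^(2m) = (2m-1)‼ vᵐ` give `I = (v + 2ρ²)/v²` and
`L₁,₁,₁ = -(6ρv + 8ρ³)/v³`. The standardized ratio vanishes at `ρ = 0` but not at `ρ = 1/2`.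
-/

open Real MeasureTheory ProbabilityTheory Filter Topology
open scoped NNReal Nat

@[fun_prop]
theorem integrable_pow_gaussianReal {μ : ℝ} {v : ℝ≥0} (n : ℕ) :
    Integrable (fun x => x ^ n) (gaussianReal μ v) := by
  refine (integrable_norm_iff (by fun_prop)).1 ?_
  simpa [norm_pow] using (memLp_id_gaussianReal (μ := μ) (v := v) n).integrable_norm_pow'

@[fun_prop]
theorem integrable_id_gaussianReal {μ : ℝ} {v : ℝ≥0} :
    Integrable (fun x => x) (gaussianReal μ v) := by
  simpa using integrable_pow_gaussianReal (μ := μ) (v := v) 1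

theorem integral_pow_gaussianReal_odd (v : ℝ≥0) (m : ℕ) :
    ∫ x, x ^ (2 * m + 1) ∂gaussianReal 0 v = 0 := by
  have h := integral_map (μ := gaussianReal 0 v) measurable_neg.aemeasurable
    (f := fun x : ℝ => x ^ (2 * m + 1)) (by fun_prop)
  rw [gaussianReal_map_neg, neg_zero] at h
  simp only [Odd.neg_pow ⟨m, rfl⟩, integral_neg] at h
  linarith

theorem integral_pow_gaussianReal_even (v : ℝ≥0) (m : ℕ) :
    ∫ x, x ^ (2 * m) ∂gaussianReal 0 v = (2 * m - 1 : ℕ)‼ * (v : ℝ) ^ m := by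
  rcases eq_or_ne v 0 with rfl | hv
  · cases m <;> simp [gaussianReal_zero_var]
  have hv' : (0 : ℝ) < v := by positivity
  have h_abs := integral_comp_abs (f := fun x : ℝ => x ^ (2 * m) * rexp (-x ^ 2 / (2 * v)))
  simp only [pow_mul, sq_abs] at h_abs
  have h_Ioi : ∫ x in Set.Ioi 0, (x ^ 2) ^ m * rexp (-x ^ 2 / (2 * v)) =
      ∫ x in Set.Ioi 0, x ^ ((2 * m : ℕ) : ℝ) * rexp (-(2 * v : ℝ)⁻¹ * x ^ (2 : ℝ)) := by
    refine setIntegral_congr_fun measurableSet_Ioi fun x _ => ?_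
    rw [Real.rpow_natCast, rpow_two, pow_mul, neg_div, div_eq_inv_mul, neg_mul]
  rw [h_Ioi, integral_rpow_mul_exp_neg_mul_rpow two_pos
    (neg_one_lt_zero.trans_le (Nat.cast_nonneg _)) (inv_pos.2 (by positivity))] at h_abs
  have h_exp : ((2 * v : ℝ)⁻¹) ^ (-(((2 * m : ℕ) : ℝ) + 1) / 2) = (2 * v) ^ m * √(2 * v) := by
    rw [inv_rpow (by positivity), ← rpow_neg (by positivity), Real.sqrt_eq_rpow,
      ← Real.rpow_natCast, ← rpow_add (by positivity)]
    push_cast; ring_nf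
  have h_Γ : (((2 * m : ℕ) : ℝ) + 1) / 2 = m + 1 / 2 := by push_cast; ring
  rw [h_exp, h_Γ, Real.Gamma_nat_add_half] at h_abs
  rw [integral_gaussianReal_eq_integral_smul hv]
  simp only [gaussianPDFReal_def, sub_zero, smul_eq_mul, mul_assoc, integral_const_mul, pow_mul]
  simp_rw [mul_comm (rexp _), h_abs]
  rw [show 2 * (π * v) = 2 * v * π by ring, Real.sqrt_mul (by positivity)]
  field_simp
  ring

theorem integral_pow_gaussianReal (v : ℝ≥0) (n : ℕ) :
    ∫ x, x ^ n ∂gaussianReal 0 v = if Even n then ((n - 1)‼ : ℝ) * v ^ (n / 2) else 0 := by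
  obtain ⟨m, rfl | rfl⟩ := Nat.even_or_odd' n
  · simp [integral_pow_gaussianReal_even]
  · simp [integral_pow_gaussianReal_odd]

theorem integral_gaussianReal_linear_add_centered_sq_pow_two (v : ℝ≥0) (β γ : ℝ) :
    ∫ x, (β * x + γ * (x ^ 2 - v)) ^ 2 ∂gaussianReal 0 v = β ^ 2 * v + 2 * γ ^ 2 * v ^ 2 := by
  ring_nf
  -- `simp` does not instantiate `integral_const_mul` at `fun x => x`, hence the explicit instance.
  simp (disch := fun_prop) only [integral_sub, integral_add, integral_neg, integral_mul_const,
    integral_const_mul, integral_const_mul _ (fun x => x), integral_const,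
    integral_id_gaussianReal, probReal_univ, smul_eq_mul, integral_pow_gaussianReal]
  norm_num [Nat.doubleFactorial]
  ring

theorem integral_gaussianReal_linear_add_centered_sq_pow_three (v : ℝ≥0) (β γ : ℝ) :
    ∫ x, (β * x + γ * (x ^ 2 - v)) ^ 3 ∂gaussianReal 0 v =
      6 * β ^ 2 * γ * v ^ 2 + 8 * γ ^ 3 * v ^ 3 := by
  ring_nf
  simp (disch := fun_prop) only [integral_sub, integral_add, integral_mul_const,
    integral_const_mul, integral_const_mul _ (fun x => x), integral_const,
    integral_id_gaussianReal, probReal_univ, smul_eq_mul, integral_pow_gaussianReal]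
  norm_num [Nat.doubleFactorial]
  ring

section PolynomialIntegrability

open Polynomial

theorem integrable_eval_of_integrable_pow {μ : Measure ℝ}
    (h : ∀ n : ℕ, Integrable (fun x => x ^ n) μ) (p : ℝ[X]) :
    Integrable (fun x => p.eval x) μ := by
  induction p using Polynomial.induction_on' with
  | add p q hp hq => simp only [eval_add]; exact hp.add hq
  | monomial n a => simpa using (h n).const_mul a

theorem integrable_evalEval_prod_of_integrable_pow {μ ν : Measure ℝ} [SFinite ν]
    (hμ : ∀ n : ℕ, Integrable (fun x => x ^ n) μ) (hν : ∀ n : ℕ, Integrable (fun y => y ^ n) ν)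
    (P : ℝ[X][X]) : Integrable (fun z : ℝ × ℝ => P.evalEval z.1 z.2) (μ.prod ν) := by
  induction P using Polynomial.induction_on' with
  | add P Q hP hQ => simp only [evalEval_add]; exact hP.add hQ
  | monomial n p =>
    simpa [evalEval] using (integrable_eval_of_integrable_pow hμ p).mul_prod (hν n)

theorem integrable_gaussianReal_prod_pow (μ₁ μ₂ : ℝ) (v₁ v₂ : ℝ≥0) (a γ c : ℝ) (k : ℕ) :
    Integrable (fun z : ℝ × ℝ => (a * z.1 * z.2 + γ * (z.2 ^ 2 - c)) ^ k)
      ((gaussianReal μ₁ v₁).prod (gaussianReal μ₂ v₂)) := by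
  have := integrable_evalEval_prod_of_integrable_pow
    (integrable_pow_gaussianReal (μ := μ₁) (v := v₁))
    (integrable_pow_gaussianReal (μ := μ₂) (v := v₂))
    ((C (C a * X) * X + C (C γ) * (X ^ 2 - C (C c))) ^ k)
  simpa [evalEval_C] using this

end PolynomialIntegrability

theorem integral_gaussianReal_prod_pow_two (v₁ v₂ : ℝ≥0) (a γ : ℝ) :
    ∫ z, (a * z.1 * z.2 + γ * (z.2 ^ 2 - v₂)) ^ 2 ∂(gaussianReal 0 v₁).prod (gaussianReal 0 v₂) =
      a ^ 2 * v₁ * v₂ + 2 * γ ^ 2 * v₂ ^ 2 := by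
  rw [integral_prod _ (integrable_gaussianReal_prod_pow 0 0 v₁ v₂ a γ v₂ 2)]
  simp only [integral_gaussianReal_linear_add_centered_sq_pow_two]
  ring_nf
  simp (disch := fun_prop) only [integral_add, integral_mul_const, integral_const_mul,
    integral_const, probReal_univ, smul_eq_mul, integral_pow_gaussianReal]
  norm_num
  ring

theorem integral_gaussianReal_prod_pow_three (v₁ v₂ : ℝ≥0) (a γ : ℝ) :
    ∫ z, (a * z.1 * z.2 + γ * (z.2 ^ 2 - v₂)) ^ 3 ∂(gaussianReal 0 v₁).prod (gaussianReal 0 v₂) =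
      6 * a ^ 2 * v₁ * γ * v₂ ^ 2 + 8 * γ ^ 3 * v₂ ^ 3 := by
  rw [integral_prod _ (integrable_gaussianReal_prod_pow 0 0 v₁ v₂ a γ v₂ 3)]
  simp only [integral_gaussianReal_linear_add_centered_sq_pow_three]
  ring_nf
  simp (disch := fun_prop) only [integral_add, integral_mul_const, integral_const_mul,
    integral_const, probReal_univ, smul_eq_mul, integral_pow_gaussianReal]
  norm_num
  ring

theorem integral_comp_shear {E : Type*} [NormedAddCommGroup E] [NormedSpace ℝ E] (ρ : ℝ)
    (G : ℝ × ℝ → E) : ∫ x : ℝ × ℝ, G (x.1, x.2 - ρ * x.1) = ∫ x, G x := by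
  have h_mp : MeasurePreserving (fun x : ℝ × ℝ => (x.1, x.2 - ρ * x.1)) :=
    (MeasurePreserving.id volume).skew_product (by fun_prop)
      (ae_of_all _ fun x => map_sub_right_eq_self volume (ρ * x))
  have h_emb : MeasurableEmbedding (fun x : ℝ × ℝ => (x.1, x.2 - ρ * x.1)) :=
    .of_measurable_inverse (by fun_prop)
      (by rw [Set.range_eq_univ.2 fun y => ⟨(y.1, y.2 + ρ * y.1), by simp⟩]; exact .univ)
      (g := fun x => (x.1, x.2 + ρ * x.1)) (by fun_prop) fun x => by simp
  exact h_mp.integral_comp h_emb G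

theorem integral_gaussianPDFReal_mul_prod {E : Type*} [NormedAddCommGroup E] [NormedSpace ℝ E]
    {μ₁ μ₂ : ℝ} {v₁ v₂ : ℝ≥0} (hv₁ : v₁ ≠ 0) (hv₂ : v₂ ≠ 0) (G : ℝ × ℝ → E) :
    ∫ x : ℝ × ℝ, (gaussianPDFReal μ₁ v₁ x.1 * gaussianPDFReal μ₂ v₂ x.2) • G x =
      ∫ x, G x ∂(gaussianReal μ₁ v₁).prod (gaussianReal μ₂ v₂) := by
  rw [gaussianReal_of_var_ne_zero _ hv₁, gaussianReal_of_var_ne_zero _ hv₂,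
    prod_withDensity (measurable_gaussianPDF _ _) (measurable_gaussianPDF _ _),
    integral_withDensity_eq_integral_toReal_smul (by fun_prop)
      (ae_of_all _ fun _ => ENNReal.mul_lt_top gaussianPDF_lt_top gaussianPDF_lt_top)]
  simp only [ENNReal.toReal_mul, toReal_gaussianPDF]
  rfl

noncomputable def bivariateNormalPDF (ρ : ℝ) (x : ℝ × ℝ) : ℝ :=
  (2 * π * √(1 - ρ ^ 2))⁻¹ * exp (-(x.1 ^ 2 - 2 * ρ * x.1 * x.2 + x.2 ^ 2) / (2 * (1 - ρ ^ 2)))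

section BivariateNormal

variable {ρ : ℝ}

theorem bivariateNormalPDF_eq_mul_gaussianPDFReal (hρ : ρ ^ 2 < 1) (x : ℝ × ℝ) :
    bivariateNormalPDF ρ x =
      gaussianPDFReal 0 1 x.1 * gaussianPDFReal 0 (1 - ρ ^ 2).toNNReal (x.2 - ρ * x.1) := by
  have hv : 0 < 1 - ρ ^ 2 := sub_pos.2 hρ
  simp only [bivariateNormalPDF, gaussianPDFReal_def, Real.coe_toNNReal _ hv.le, NNReal.coe_one,
    sub_zero, mul_one]
  rw [mul_mul_mul_comm, ← exp_add, ← mul_inv, ← sqrt_mul (by positivity),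
    show 2 * π * (2 * π * (1 - ρ ^ 2)) = (2 * π * √(1 - ρ ^ 2)) ^ 2 by
      rw [mul_pow, sq_sqrt hv.le]; ring, sqrt_sq (by positivity)]
  congr 2
  field_simp
  ring

theorem integral_mul_bivariateNormalPDF (hρ : ρ ^ 2 < 1) (H : ℝ × ℝ → ℝ) :
    ∫ x, H (x.1, x.2 - ρ * x.1) * bivariateNormalPDF ρ x =
      ∫ z, H z ∂(gaussianReal 0 1).prod (gaussianReal 0 (1 - ρ ^ 2).toNNReal) := by
  have hv : (1 - ρ ^ 2).toNNReal ≠ 0 := by simpa using hρ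
  have h_shear := integral_comp_shear ρ fun z =>
    (gaussianPDFReal 0 1 z.1 * gaussianPDFReal 0 (1 - ρ ^ 2).toNNReal z.2) • H z
  rw [← integral_gaussianPDFReal_mul_prod one_ne_zero hv, ← h_shear]
  simp only [bivariateNormalPDF_eq_mul_gaussianPDFReal hρ, smul_eq_mul, mul_comm]

theorem hasDerivAt_log_bivariateNormalPDF (hρ : ρ ^ 2 < 1) (x : ℝ × ℝ) :
    HasDerivAt (fun r => log (bivariateNormalPDF r x))
      ((1 - ρ ^ 2)⁻¹ * x.1 * (x.2 - ρ * x.1) +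
        -ρ / (1 - ρ ^ 2) ^ 2 * ((x.2 - ρ * x.1) ^ 2 - (1 - ρ ^ 2))) ρ := by
  have hv : 0 < 1 - ρ ^ 2 := sub_pos.2 hρ
  have h_log : (fun r => log (bivariateNormalPDF r x)) =ᶠ[𝓝 ρ] fun r => -log (2 * π) -
      log (1 - r ^ 2) / 2 - (x.1 ^ 2 + x.2 ^ 2 - 2 * x.1 * x.2 * r) / (2 * (1 - r ^ 2)) := by
    filter_upwards [(isOpen_lt (continuous_pow 2) continuous_const).mem_nhds hρ] with r hr
    have hvr : 0 < 1 - r ^ 2 := sub_pos.2 hr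
    rw [bivariateNormalPDF, log_mul (by positivity) (exp_pos _).ne', log_exp, log_inv,
      log_mul (by positivity) (by positivity), log_sqrt hvr.le]
    ring
  have h_v : HasDerivAt (fun r => 1 - r ^ 2) (-(2 * ρ)) ρ := by
    simpa using (hasDerivAt_pow 2 ρ).const_sub 1
  have h_Q : HasDerivAt (fun r => x.1 ^ 2 + x.2 ^ 2 - 2 * x.1 * x.2 * r) (-(2 * x.1 * x.2)) ρ := by
    simpa using ((hasDerivAt_id' ρ).const_mul (2 * x.1 * x.2)).const_sub (x.1 ^ 2 + x.2 ^ 2)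
  refine (((h_v.log hv.ne').div_const 2 |>.const_sub _).sub
    (h_Q.div (h_v.const_mul 2) (by positivity))).congr_of_eventuallyEq h_log |>.congr_deriv ?_
  field_simp
  ring

theorem integral_deriv_log_bivariateNormalPDF_pow_mul (hρ : ρ ^ 2 < 1) (k : ℕ) :
    ∫ x, deriv (fun r => log (bivariateNormalPDF r x)) ρ ^ k * bivariateNormalPDF ρ x =
      ∫ z, ((1 - ρ ^ 2)⁻¹ * z.1 * z.2 + -ρ / (1 - ρ ^ 2) ^ 2 * (z.2 ^ 2 - (1 - ρ ^ 2).toNNReal)) ^ k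
        ∂(gaussianReal 0 1).prod (gaussianReal 0 (1 - ρ ^ 2).toNNReal) := by
  rw [← integral_mul_bivariateNormalPDF hρ, Real.coe_toNNReal _ (sub_pos.2 hρ).le]
  simp_rw [(hasDerivAt_log_bivariateNormalPDF hρ _).deriv]

theorem integral_deriv_log_bivariateNormalPDF_pow_two_mul (hρ : ρ ^ 2 < 1) :
    ∫ x, deriv (fun r => log (bivariateNormalPDF r x)) ρ ^ 2 * bivariateNormalPDF ρ x =
      (1 + ρ ^ 2) / (1 - ρ ^ 2) ^ 2 := by
  have hv : 0 < 1 - ρ ^ 2 := sub_pos.2 hρ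
  rw [integral_deriv_log_bivariateNormalPDF_pow_mul hρ, integral_gaussianReal_prod_pow_two,
    Real.coe_toNNReal _ hv.le, NNReal.coe_one]
  field_simp
  ring

theorem integral_deriv_log_bivariateNormalPDF_pow_three_mul (hρ : ρ ^ 2 < 1) :
    ∫ x, deriv (fun r => log (bivariateNormalPDF r x)) ρ ^ 3 * bivariateNormalPDF ρ x =
      -2 * ρ * (3 + ρ ^ 2) / (1 - ρ ^ 2) ^ 3 := by
  have hv : 0 < 1 - ρ ^ 2 := sub_pos.2 hρ
  rw [integral_deriv_log_bivariateNormalPDF_pow_mul hρ, integral_gaussianReal_prod_pow_three,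
    Real.coe_toNNReal _ hv.le, NNReal.coe_one]
  field_simp
  ring

end BivariateNormal

theorem div_pow_three_div_rpow_three_halves {a b c : ℝ} (hb : 0 ≤ b) (hc : 0 < c) :
    a / c ^ 3 / (b / c ^ 2) ^ ((3 : ℝ) / 2) = a / b ^ ((3 : ℝ) / 2) := by
  rw [div_rpow hb (by positivity), ← Real.rpow_natCast c 2, ← rpow_mul hc.le]
  norm_num
  field_simp

/-- **Failure of second-order matching for the bivariate normal correlation.**
For `(X₁,X₂) ~ N₂(0, [[1,ρ],[ρ,1]])`, `ρ ∈ (-1,1)`, with density `f(x|ρ)` and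
score `s(x,ρ) = ∂ log f/∂ρ`: the Fisher information `I(ρ) = E[s²]` equals
`(1+ρ²)/(1-ρ²)²`, the third moment `L₁,₁,₁(ρ) = E[s³]` equals
`-2ρ(3+ρ²)/(1-ρ²)³`, the ratio `L₁,₁,₁/I^{3/2} = -2ρ(3+ρ²)/(1+ρ²)^{3/2}` is not
constant in `ρ`; hence Jeffreys' prior fails the second-order probability
matching condition. -/
theorem bivariate_normal_no_second_order_matching
    (f : ℝ × ℝ → ℝ → ℝ)
    (hf : ∀ x ρ, f x ρ = (2 * π * Real.sqrt (1 - ρ ^ 2))⁻¹ *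
      Real.exp (-(x.1 ^ 2 - 2 * ρ * x.1 * x.2 + x.2 ^ 2) / (2 * (1 - ρ ^ 2))))
    (s : ℝ × ℝ → ℝ → ℝ) (hs : ∀ x ρ, s x ρ = deriv (fun r => Real.log (f x r)) ρ)
    (I L : ℝ → ℝ)
    (hI : ∀ ρ, I ρ = ∫ x : ℝ × ℝ, (s x ρ) ^ 2 * f x ρ)
    (hL : ∀ ρ, L ρ = ∫ x : ℝ × ℝ, (s x ρ) ^ 3 * f x ρ) :
    (∀ ρ : ℝ, -1 < ρ → ρ < 1 → I ρ = (1 + ρ ^ 2) / (1 - ρ ^ 2) ^ 2) ∧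
    (∀ ρ : ℝ, -1 < ρ → ρ < 1 → L ρ = -2 * ρ * (3 + ρ ^ 2) / (1 - ρ ^ 2) ^ 3) ∧
    (∀ ρ : ℝ, -1 < ρ → ρ < 1 →
      L ρ / (I ρ) ^ ((3 : ℝ) / 2) = -2 * ρ * (3 + ρ ^ 2) / (1 + ρ ^ 2) ^ ((3 : ℝ) / 2)) ∧
    ¬ (∃ c : ℝ, ∀ ρ : ℝ, -1 < ρ → ρ < 1 → L ρ / (I ρ) ^ ((3 : ℝ) / 2) = c) := by
  obtain rfl : f = fun x ρ => bivariateNormalPDF ρ x := funext₂ hf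
  have h_sq {ρ : ℝ} (h₁ : -1 < ρ) (h₂ : ρ < 1) : ρ ^ 2 < 1 := by nlinarith
  have hI' : ∀ ρ : ℝ, -1 < ρ → ρ < 1 → I ρ = (1 + ρ ^ 2) / (1 - ρ ^ 2) ^ 2 := fun ρ h₁ h₂ => by
    simpa only [hI, hs] using integral_deriv_log_bivariateNormalPDF_pow_two_mul (h_sq h₁ h₂)
  have hL' : ∀ ρ : ℝ, -1 < ρ → ρ < 1 → L ρ = -2 * ρ * (3 + ρ ^ 2) / (1 - ρ ^ 2) ^ 3 :=
    fun ρ h₁ h₂ => by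
      simpa only [hL, hs] using integral_deriv_log_bivariateNormalPDF_pow_three_mul (h_sq h₁ h₂)
  have h_ratio : ∀ ρ : ℝ, -1 < ρ → ρ < 1 →
      L ρ / (I ρ) ^ ((3 : ℝ) / 2) = -2 * ρ * (3 + ρ ^ 2) / (1 + ρ ^ 2) ^ ((3 : ℝ) / 2) :=
    fun ρ h₁ h₂ => by
      rw [hI' ρ h₁ h₂, hL' ρ h₁ h₂]
      exact div_pow_three_div_rpow_three_halves (by positivity) (sub_pos.2 (h_sq h₁ h₂))
  refine ⟨hI', hL', h_ratio, fun ⟨c, hc⟩ => ?_⟩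
  have h_zero := (hc 0 (by norm_num) (by norm_num)).symm.trans
    (h_ratio 0 (by norm_num) (by norm_num))
  have h_half := (hc (1 / 2) (by norm_num) (by norm_num)).symm.trans
    (h_ratio (1 / 2) (by norm_num) (by norm_num))
  have h_neg : -2 * (1 / 2 : ℝ) * (3 + (1 / 2) ^ 2) / (1 + (1 / 2) ^ 2) ^ ((3 : ℝ) / 2) < 0 :=
    div_neg_of_neg_of_pos (by norm_num) (by positivity)
  norm_num at h_zero
  linarith
end
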